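/- arXiv:1210.4076 — 2 statements merged into one kernel-verified Lean document; each statement's English description precedes it below -/
import Mathlib

section
/- Let p ≥ 3 be an integer, let (λ_n)_{n≥1} be a sequence of complex numbers with ∑_{n=1}^∞ |λ_n|^{2p} < ∞, and let z ∈ ℂ. Then the infinite products ∏_{n=1}^∞ E_{2p}(−zλ_n), ∏_{n=1}^∞ E_{2p}(zλ_n), ∏_{n=1}^∞ E_p(z²λ_n²) and ∏_{n=1}^∞ E_{⌈p/2⌉}(−z⁴λ_n⁴) are all multipliable, and (∏_{n=1}^∞ E_{2p}(−zλ_n)) · (∏_{n=1}^∞ E_{2p}(zλ_n)) · (∏_{n=1}^∞ E_p(z²λ_n²)) = ∏_{n=1}^∞ E_{⌈p/2⌉}(−z⁴λ_n⁴). -/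
open Complex

/-! Since `(1 + w)(1 - w) = 1 - w²` and the truncated series of `log (1 + w)` obey the same
relation as `log (1 + w) + log (1 - w) = log (1 - w²)`, the factors satisfy
`E_n(w) E_n(-w) = E_{⌈n/2⌉}(-w²)`. Applied at `n = 2p`, `w = zλ` and then at `n = p`, `w = z²λ²`,
this gives the identity factor by factor. For `‖w‖ ≤ 1/2` the logarithm of `E_q(w)` is
`log (1 + w) - logTaylor q w = O(‖w‖^q)`, so the products converge. -/

/-- The Weierstrass-type factor `E_p(w) = (1+w)·exp(∑_{j=1}^{p-1} (-w)^j / j)`. -/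
noncomputable def weierstrassFactor (p : ℕ) (w : ℂ) : ℂ :=
  (1 + w) * Complex.exp (∑ j ∈ Finset.Icc 1 (p - 1), (-w) ^ j / (j : ℂ))

theorem weierstrassFactor_eq_mul_exp_neg_logTaylor (q : ℕ) (w : ℂ) :
    weierstrassFactor q w = (1 + w) * exp (-logTaylor q w) := by
  have hIcc : Finset.Icc 1 (q - 1) = (Finset.range q).erase 0 := by
    ext j
    simp only [Finset.mem_Icc, Finset.mem_erase, Finset.mem_range]
    omega
  -- the `j = 0` term of `logTaylor` is `x / 0 = 0`
  rw [weierstrassFactor, hIcc, Finset.sum_erase _ (by simp), logTaylor,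
    ← Finset.sum_neg_distrib]
  congr 2
  refine Finset.sum_congr rfl fun j _ => ?_
  rw [neg_pow, pow_succ]
  ring

-- Odd terms cancel, and the doubled even terms `2 w^(2k) / (2k)` are those of `logTaylor _ (-w²)`.
theorem logTaylor_add_logTaylor_neg (n : ℕ) (w : ℂ) :
    logTaylor n w + logTaylor n (-w) = logTaylor ((n + 1) / 2) (-w ^ 2) := by
  induction n with
  | zero => simp [logTaylor_zero]
  | succ n ih =>
    simp only [logTaylor_succ, Pi.add_apply]
    rcases Nat.even_or_odd n with ⟨k, rfl⟩ | ⟨k, rfl⟩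
    · rw [show (k + k + 1 + 1) / 2 = (k + k + 1) / 2 + 1 by omega, logTaylor_succ,
        Pi.add_apply, ← ih, show (k + k + 1) / 2 = k by omega]
      rcases eq_or_ne k 0 with rfl | hk
      · simp
      · have hk' : (k : ℂ) ≠ 0 := by exact_mod_cast hk
        rw [Even.neg_pow ⟨k, rfl⟩, neg_pow (w ^ 2), ← pow_mul, ← two_mul, ← mul_assoc,
          ← pow_add, show k + 1 + k = 2 * k + 1 by ring]
        push_cast
        field_simp
        ring
    · rw [show (2 * k + 1 + 1 + 1) / 2 = (2 * k + 1 + 1) / 2 by omega, ← ih,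
        Odd.neg_pow ⟨k, rfl⟩]
      ring

theorem weierstrassFactor_mul_weierstrassFactor_neg (n : ℕ) (w : ℂ) :
    weierstrassFactor n w * weierstrassFactor n (-w) =
      weierstrassFactor ((n + 1) / 2) (-w ^ 2) := by
  simp only [weierstrassFactor_eq_mul_exp_neg_logTaylor, ← logTaylor_add_logTaylor_neg]
  rw [neg_add, exp_add]
  ring

theorem norm_log_one_add_sub_logTaylor_le {q : ℕ} (hq : 1 ≤ q) {w : ℂ} (hw : ‖w‖ ≤ 1 / 2) :
    ‖log (1 + w) - logTaylor q w‖ ≤ 2 * ‖w‖ ^ q := by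
  obtain ⟨n, rfl⟩ : ∃ n, q = n + 1 := ⟨q - 1, by omega⟩
  refine (norm_log_sub_logTaylor_le n (by linarith)).trans ?_
  have hinv : (1 - ‖w‖)⁻¹ ≤ 2 := by
    rw [inv_le_comm₀ (by linarith) two_pos]
    linarith
  have hn : (1 : ℝ) ≤ n + 1 := by linarith [n.cast_nonneg (α := ℝ)]
  calc ‖w‖ ^ (n + 1) * (1 - ‖w‖)⁻¹ / (n + 1)
      ≤ ‖w‖ ^ (n + 1) * 2 / 1 := by gcongr
    _ = 2 * ‖w‖ ^ (n + 1) := by ring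

theorem log_weierstrassFactor {q : ℕ} (hq : 1 ≤ q) {w : ℂ} (hw : ‖w‖ ≤ 1 / 2) :
    log (weierstrassFactor q w) = log (1 + w) - logTaylor q w := by
  have hw0 : 1 + w ≠ 0 := by
    intro h
    rw [eq_neg_of_add_eq_zero_right h, norm_neg, norm_one] at hw
    norm_num at hw
  have hR : ‖log (1 + w) - logTaylor q w‖ ≤ 1 :=
    (norm_log_one_add_sub_logTaylor_le hq hw).trans <| by
      nlinarith [pow_le_pow_left₀ (norm_nonneg w) hw q,
        pow_le_pow_of_le_one (by norm_num : (0 : ℝ) ≤ 1 / 2) (by norm_num) hq]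
  have him := abs_le.mp ((abs_im_le_norm _).trans hR)
  rw [weierstrassFactor_eq_mul_exp_neg_logTaylor, ← exp_log hw0, ← exp_add, exp_log hw0,
    ← sub_eq_add_neg, log_exp] <;> linarith [Real.pi_gt_three]

theorem multipliable_weierstrassFactor {ι : Type*} {q : ℕ} (hq : 1 ≤ q) {a : ι → ℂ}
    (ha : Summable fun i => ‖a i‖ ^ q) :
    Multipliable fun i => weierstrassFactor q (a i) := by
  have hsmall : ∀ᶠ i in Filter.cofinite, ‖a i‖ ≤ 1 / 2 := by
    filter_upwards [ha.tendsto_cofinite_zero.eventually_le_const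
      (show (0 : ℝ) < (1 / 2) ^ q by positivity)] with i hi
    exact (pow_le_pow_iff_left₀ (norm_nonneg _) (by norm_num) (by omega)).mp hi
  refine multipliable_of_summable_log ((ha.mul_left 2).of_norm_bounded_eventually ?_)
  filter_upwards [hsmall] with i hi
  rw [log_weierstrassFactor hq hi]
  exact norm_log_one_add_sub_logTaylor_le hq hi

/-- For `p ≥ 3` and a sequence `(λ n)` with `∑ ‖λ n‖^(2p) < ∞` (eigenvalues of an
operator in 𝒥_{2p}) and `z ∈ ℂ`, the products defining `det_{2p}(I - zK)`,
`det_{2p}(I + zK)`, `det_p(I + z²K²)` and `det_{⌈p/2⌉}(I - z⁴K⁴)` are multipliable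
and `det_{2p}(I - zK) · det_{2p}(I + zK) · det_p(I + z²K²) = det_{⌈p/2⌉}(I - z⁴K⁴)`. -/
theorem stmt_5 (p : ℕ) (hp : 3 ≤ p) (lam : ℕ → ℂ)
    (hlam : Summable fun n => ‖lam n‖ ^ (2 * p)) (z : ℂ) :
    Multipliable (fun n => weierstrassFactor (2 * p) (-(z * lam n))) ∧
    Multipliable (fun n => weierstrassFactor (2 * p) (z * lam n)) ∧
    Multipliable (fun n => weierstrassFactor p (z ^ 2 * lam n ^ 2)) ∧
    Multipliable (fun n => weierstrassFactor ((p + 1) / 2) (-(z ^ 4 * lam n ^ 4))) ∧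
    (∏' n, weierstrassFactor (2 * p) (-(z * lam n))) *
        (∏' n, weierstrassFactor (2 * p) (z * lam n)) *
        (∏' n, weierstrassFactor p (z ^ 2 * lam n ^ 2)) =
      ∏' n, weierstrassFactor ((p + 1) / 2) (-(z ^ 4 * lam n ^ 4)) := by
  have hs : Summable fun n => ‖z * lam n‖ ^ (2 * p) := by
    simpa only [norm_mul, mul_pow] using hlam.mul_left (‖z‖ ^ (2 * p))
  have m1 := multipliable_weierstrassFactor (q := 2 * p) (by omega) (a := fun n => -(z * lam n))
    (by simpa only [norm_neg] using hs)
  have m2 := multipliable_weierstrassFactor (by omega) hs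
  have m3 := multipliable_weierstrassFactor (q := p) (by omega) (a := fun n => z ^ 2 * lam n ^ 2)
    (by simpa only [norm_mul, norm_pow, ← mul_pow, ← pow_mul] using hs)
  have hfactor : ∀ n, weierstrassFactor (2 * p) (-(z * lam n)) *
      weierstrassFactor (2 * p) (z * lam n) * weierstrassFactor p (z ^ 2 * lam n ^ 2) =
      weierstrassFactor ((p + 1) / 2) (-(z ^ 4 * lam n ^ 4)) := fun n => calc
    _ = weierstrassFactor p (z ^ 2 * lam n ^ 2) * weierstrassFactor p (-(z ^ 2 * lam n ^ 2)) := by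
      rw [mul_comm (weierstrassFactor _ (-_)), weierstrassFactor_mul_weierstrassFactor_neg,
        show (2 * p + 1) / 2 = p by omega, mul_pow, mul_comm]
    _ = _ := by rw [weierstrassFactor_mul_weierstrassFactor_neg]; ring_nf
  refine ⟨m1, m2, m3, ((m1.mul m2).mul m3).congr hfactor, ?_⟩
  rw [← m1.tprod_mul m2, ← (m1.mul m2).tprod_mul m3]
  exact tprod_congr hfactor
end

section
/- Let p ≥ 1 be an integer and let (λ_n)_{n≥1} be a sequence of complex numbers with ∑_{n=1}^∞ |λ_n|^p < ∞. For each N ≥ 1 let λ_{1,N}, …, λ_{N,N} ∈ ℂ, and assume: (i) sup_{N≥1} ∑_{n=1}^N |λ_{n,N}|^p < ∞, and (ii) ∑_{n=1}^N |λ_{n,N} − λ_n| → 0 as N → ∞. Then for every M > 0, sup_{|z| ≤ M} |∏_{n=1}^N E_p(zλ_{n,N}) − ∏_{n=1}^∞ E_p(zλ_n)| → 0 as N → ∞; that is, the approximate p-modified determinants converge to the p-modified Fredholm determinant uniformly on every bounded set of z. -/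
open Complex

/-!
Since `E_p'(w) = (-w)^(p-1) exp(∑_{j=1}^{p-1} (-w)^j / j)` and `E_p(0) = 1`, on the ball `‖w‖ ≤ R`
the factor `E_p` is Lipschitz with constant `R^(p-1) K` and satisfies `‖E_p(w) - 1‖ ≤ K ‖w‖^p`,
where `K = exp (∑_{j=1}^{p-1} R^j)`. For `‖z‖ ≤ M` every factor `E_p(zλ)` therefore has norm at most
`exp (K M^p ‖λ‖^p)`, and telescoping the two finite products bounds
`‖∏_{n<N} E_p(zλ_{n,N}) - ∏_{n<N} E_p(zλ_n)‖` by a constant times `∑_{n<N} ‖λ_{n,N} - λ_n‖`,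
uniformly in `z`. The bound `‖E_p(zλ_n) - 1‖ ≤ K M^p ‖λ_n‖^p` also makes the partial products
`∏_{n<N} E_p(zλ_n)` converge uniformly to the infinite product.
-/

open Filter Topology Finset Metric

theorem le_max_one_of_pow_le {a b : ℝ} {p : ℕ} (hp : p ≠ 0) (h : a ^ p ≤ b) : a ≤ max 1 b := by
  rcases le_or_gt a 1 with ha | ha
  · exact ha.trans (le_max_left _ _)
  · exact (le_self_pow₀ ha.le hp).trans (h.trans (le_max_right _ _))

theorem TendstoUniformlyOn.of_dist_le {ι α β : Type*} [PseudoMetricSpace β] {l : Filter ι}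
    {s : Set α} {F G : ι → α → β} {f : α → β} {g : ι → ℝ} (hF : TendstoUniformlyOn F f l s)
    (hg : Tendsto g l (𝓝 0)) (hFG : ∀ᶠ i in l, ∀ x ∈ s, dist (F i x) (G i x) ≤ g i) :
    TendstoUniformlyOn G f l s := by
  rw [Metric.tendstoUniformlyOn_iff] at hF ⊢
  intro ε hε
  filter_upwards [hF (ε / 2) (half_pos hε), hg.eventually_lt_const (half_pos hε), hFG]
    with i hfF hg hFG x hx
  calc dist (f x) (G i x) ≤ dist (f x) (F i x) + dist (F i x) (G i x) := dist_triangle _ _ _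
    _ < ε / 2 + ε / 2 := add_lt_add_of_lt_of_le (hfF x hx) ((hFG x hx).trans hg.le)
    _ = ε := add_halves ε

theorem norm_le_exp_of_norm_sub_one_le {R : Type*} [SeminormedRing R] [NormOneClass R] {x : R}
    {t : ℝ} (h : ‖x - 1‖ ≤ t) : ‖x‖ ≤ Real.exp t :=
  calc ‖x‖ ≤ ‖(1 : R)‖ + ‖x - 1‖ := norm_le_norm_add_norm_sub' x 1
    _ ≤ t + 1 := by rw [norm_one]; linarith
    _ ≤ Real.exp t := Real.add_one_le_exp t

theorem Finset.norm_prod_sub_prod_le_exp_mul {ι R : Type*} [NormedCommRing R] [NormOneClass R]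
    (s : Finset ι) {f g : ι → R} {c : ι → ℝ} (hc : ∀ i ∈ s, 0 ≤ c i)
    (hf : ∀ i ∈ s, ‖f i‖ ≤ Real.exp (c i)) (hg : ∀ i ∈ s, ‖g i‖ ≤ Real.exp (c i)) :
    ‖∏ i ∈ s, f i - ∏ i ∈ s, g i‖ ≤ Real.exp (∑ i ∈ s, c i) * ∑ i ∈ s, ‖f i - g i‖ := by
  induction s using Finset.cons_induction with
  | empty => simp
  | cons a s _ ih =>
    simp only [forall_mem_cons] at hc hf hg
    have hfs : ‖∏ i ∈ s, f i‖ ≤ Real.exp (∑ i ∈ s, c i) := by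
      rw [Real.exp_sum]
      exact (norm_prod_le _ _).trans
        (prod_le_prod (fun _ _ => norm_nonneg _) hf.2)
    have hca : 1 ≤ Real.exp (c a) := Real.one_le_exp hc.1
    rw [prod_cons, prod_cons, sum_cons, sum_cons, Real.exp_add]
    calc ‖f a * ∏ i ∈ s, f i - g a * ∏ i ∈ s, g i‖
        = ‖(f a - g a) * ∏ i ∈ s, f i + g a * (∏ i ∈ s, f i - ∏ i ∈ s, g i)‖ := by
          congr 1; ring
      _ ≤ ‖f a - g a‖ * ‖∏ i ∈ s, f i‖ + ‖g a‖ * ‖∏ i ∈ s, f i - ∏ i ∈ s, g i‖ :=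
        (norm_add_le _ _).trans (add_le_add (norm_mul_le _ _) (norm_mul_le _ _))
      _ ≤ ‖f a - g a‖ * Real.exp (∑ i ∈ s, c i)
          + Real.exp (c a) * (Real.exp (∑ i ∈ s, c i) * ∑ i ∈ s, ‖f i - g i‖) := by
        gcongr
        exacts [hg.1, ih hc.2 hf.2 hg.2]
      _ ≤ Real.exp (c a) * Real.exp (∑ i ∈ s, c i) * (‖f a - g a‖ + ∑ i ∈ s, ‖f i - g i‖) := by
        nlinarith [mul_nonneg (norm_nonneg (f a - g a)) (Real.exp_pos (∑ i ∈ s, c i)).le]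

theorem weierstrassFactor_zero (p : ℕ) : weierstrassFactor p 0 = 1 := by
  have h : ∀ j ∈ Icc 1 (p - 1), (-(0 : ℂ)) ^ j / (j : ℂ) = 0 := fun j hj => by
    simp [zero_pow (by grind : j ≠ 0)]
  rw [weierstrassFactor, sum_eq_zero h]
  simp

theorem hasDerivAt_weierstrassFactor (p : ℕ) (w : ℂ) :
    HasDerivAt (weierstrassFactor p)
      ((-w) ^ (p - 1) * cexp (∑ j ∈ Icc 1 (p - 1), (-w) ^ j / (j : ℂ))) w := by
  set g : ℂ → ℂ := fun w => ∑ j ∈ Icc 1 (p - 1), (-w) ^ j / (j : ℂ)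
  have hg : HasDerivAt g (-∑ k ∈ range (p - 1), (-w) ^ k) w := by
    have hterm : ∀ j ∈ Icc 1 (p - 1),
        HasDerivAt (fun w : ℂ => (-w) ^ j / (j : ℂ)) (-(-w) ^ (j - 1)) w := fun j hj => by
      have hj : (j : ℂ) ≠ 0 := Nat.cast_ne_zero.mpr (by grind)
      refine ((((hasDerivAt_id w).neg).fun_pow j).div_const (j : ℂ)).congr_deriv ?_
      field_simp
      simp
    refine (HasDerivAt.fun_sum hterm).congr_deriv ?_
    rw [← sum_neg_distrib, ← Ico_add_one_right_eq_Icc, sum_Ico_eq_sum_range]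
    simp [add_comm 1]
  refine (((hasDerivAt_id w).const_add 1).mul hg.cexp).congr_deriv ?_
  simp only [id, g]
  linear_combination cexp (g w) * geom_sum_mul (-w) (p - 1)

theorem continuous_weierstrassFactor (p : ℕ) : Continuous (weierstrassFactor p) :=
  continuous_iff_continuousAt.mpr fun w => (hasDerivAt_weierstrassFactor p w).continuousAt

noncomputable def weierstrassConst (p : ℕ) (R : ℝ) : ℝ :=
  Real.exp (∑ j ∈ Icc 1 (p - 1), R ^ j)

theorem weierstrassConst_pos (p : ℕ) (R : ℝ) : 0 < weierstrassConst p R := Real.exp_pos _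

theorem norm_cexp_weierstrassFactor_exponent_le (p : ℕ) {R : ℝ} {w : ℂ} (hw : ‖w‖ ≤ R) :
    ‖cexp (∑ j ∈ Icc 1 (p - 1), (-w) ^ j / (j : ℂ))‖ ≤ weierstrassConst p R := by
  refine (norm_exp_le_exp_norm _).trans (Real.exp_le_exp.mpr
    ((norm_sum_le _ _).trans (sum_le_sum fun j hj => ?_)))
  have hj : (1 : ℝ) ≤ j := by exact_mod_cast (mem_Icc.mp hj).1
  rw [norm_div, norm_pow, norm_neg, Complex.norm_natCast]
  exact (div_le_self (by positivity) hj).trans (pow_le_pow_left₀ (norm_nonneg w) hw j)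

theorem norm_weierstrassFactor_sub_le (p : ℕ) {r R : ℝ} (hrR : r ≤ R) {w w' : ℂ}
    (hw : ‖w‖ ≤ r) (hw' : ‖w'‖ ≤ r) :
    ‖weierstrassFactor p w - weierstrassFactor p w'‖
      ≤ r ^ (p - 1) * weierstrassConst p R * ‖w - w'‖ := by
  have hr : 0 ≤ r := (norm_nonneg w).trans hw
  refine (convex_closedBall (0 : ℂ) r).norm_image_sub_le_of_norm_hasDerivWithin_le
    (fun x _ => (hasDerivAt_weierstrassFactor p x).hasDerivWithinAt) (fun x hx => ?_)
    (mem_closedBall_zero_iff.mpr hw') (mem_closedBall_zero_iff.mpr hw)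
  have hx : ‖x‖ ≤ r := mem_closedBall_zero_iff.mp hx
  rw [norm_mul, norm_pow, norm_neg]
  exact mul_le_mul (pow_le_pow_left₀ (norm_nonneg x) hx _)
    (norm_cexp_weierstrassFactor_exponent_le p (hx.trans hrR)) (norm_nonneg _) (by positivity)

theorem norm_weierstrassFactor_sub_one_le {p : ℕ} (hp : 1 ≤ p) {R : ℝ} {w : ℂ} (hw : ‖w‖ ≤ R) :
    ‖weierstrassFactor p w - 1‖ ≤ weierstrassConst p R * ‖w‖ ^ p := by
  have h := norm_weierstrassFactor_sub_le p hw le_rfl (norm_zero.trans_le (norm_nonneg w))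
  rw [weierstrassFactor_zero, sub_zero] at h
  obtain ⟨q, rfl⟩ := Nat.exists_eq_add_of_le' hp
  calc _ ≤ ‖w‖ ^ (q + 1 - 1) * weierstrassConst (q + 1) R * ‖w‖ := h
    _ = weierstrassConst (q + 1) R * ‖w‖ ^ (q + 1) := by rw [add_tsub_cancel_right]; ring

theorem norm_prod_weierstrassFactor_sub_prod_le {ι : Type*} {p : ℕ} (hp : 1 ≤ p) {R : ℝ}
    (s : Finset ι) {a b : ι → ℂ} (ha : ∀ i ∈ s, ‖a i‖ ≤ R) (hb : ∀ i ∈ s, ‖b i‖ ≤ R) :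
    ‖∏ i ∈ s, weierstrassFactor p (a i) - ∏ i ∈ s, weierstrassFactor p (b i)‖
      ≤ Real.exp (weierstrassConst p R * ∑ i ∈ s, (‖a i‖ ^ p + ‖b i‖ ^ p))
        * (R ^ (p - 1) * weierstrassConst p R * ∑ i ∈ s, ‖a i - b i‖) := by
  have hK := (weierstrassConst_pos p R).le
  rw [mul_sum, mul_sum]
  refine (s.norm_prod_sub_prod_le_exp_mul
    (c := fun i => weierstrassConst p R * (‖a i‖ ^ p + ‖b i‖ ^ p)) (fun i _ => by positivity)
    (fun i hi => norm_le_exp_of_norm_sub_one_le ?_) (fun i hi => norm_le_exp_of_norm_sub_one_le ?_)).trans ?_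
  · refine (norm_weierstrassFactor_sub_one_le hp (ha i hi)).trans ?_
    gcongr
    exact le_add_of_nonneg_right (by positivity)
  · refine (norm_weierstrassFactor_sub_one_le hp (hb i hi)).trans ?_
    gcongr
    exact le_add_of_nonneg_left (by positivity)
  · gcongr with i hi
    exact norm_weierstrassFactor_sub_le p le_rfl (ha i hi) (hb i hi)

theorem norm_prod_weierstrassFactor_mul_sub_prod_le {ι : Type*} {p : ℕ} (hp : 1 ≤ p)
    {M Λ A : ℝ} {z : ℂ} (hz : ‖z‖ ≤ M) (s : Finset ι) {a b : ι → ℂ} (ha : ∀ i ∈ s, ‖a i‖ ≤ Λ)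
    (hb : ∀ i ∈ s, ‖b i‖ ≤ Λ) (hA : ∑ i ∈ s, (‖a i‖ ^ p + ‖b i‖ ^ p) ≤ A) :
    ‖∏ i ∈ s, weierstrassFactor p (z * a i) - ∏ i ∈ s, weierstrassFactor p (z * b i)‖
      ≤ Real.exp (weierstrassConst p (M * Λ) * (M ^ p * A))
        * ((M * Λ) ^ (p - 1) * weierstrassConst p (M * Λ) * (M * ∑ i ∈ s, ‖a i - b i‖)) := by
  rcases s.eq_empty_or_nonempty with rfl | ⟨i₀, hi₀⟩
  · simp
  have hM : 0 ≤ M := (norm_nonneg z).trans hz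
  have hΛ : 0 ≤ Λ := (norm_nonneg _).trans (ha i₀ hi₀)
  have hK := (weierstrassConst_pos p (M * Λ)).le
  have hzΛ : ∀ c : ℂ, ‖c‖ ≤ Λ → ‖z * c‖ ≤ M * Λ := fun c hc => by
    rw [norm_mul]; exact mul_le_mul hz hc (norm_nonneg c) hM
  refine (norm_prod_weierstrassFactor_sub_prod_le hp s (fun i hi => hzΛ _ (ha i hi))
    (fun i hi => hzΛ _ (hb i hi))).trans ?_
  simp only [← mul_sub, norm_mul, mul_pow, ← mul_add, ← mul_sum]
  gcongr

theorem tendstoUniformlyOn_prod_range_weierstrassFactor {p : ℕ} (hp : 1 ≤ p) {lam : ℕ → ℂ}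
    (hlam : Summable fun n => ‖lam n‖ ^ p) (M : ℝ) :
    TendstoUniformlyOn (fun N z => ∏ n ∈ range N, weierstrassFactor p (z * lam n))
      (fun z => ∏' n, weierstrassFactor p (z * lam n)) atTop (closedBall 0 M) := by
  set Λ := max 1 (∑' n, ‖lam n‖ ^ p)
  have hΛ : ∀ n, ‖lam n‖ ≤ Λ := fun n =>
    le_max_one_of_pow_le (by omega) (hlam.le_tsum n fun _ _ => by positivity)
  have hbound : ∀ n, ∀ z ∈ closedBall (0 : ℂ) M,
      ‖weierstrassFactor p (z * lam n) - 1‖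
        ≤ weierstrassConst p (M * Λ) * M ^ p * ‖lam n‖ ^ p := by
    intro n z hz
    have hz : ‖z‖ ≤ M := mem_closedBall_zero_iff.mp hz
    have hM : 0 ≤ M := (norm_nonneg z).trans hz
    refine (norm_weierstrassFactor_sub_one_le hp (R := M * Λ) ?_).trans ?_
    · rw [norm_mul]; exact mul_le_mul hz (hΛ n) (norm_nonneg _) hM
    · rw [norm_mul, mul_pow, mul_assoc]
      have := (weierstrassConst_pos p (M * Λ)).le
      gcongr
  have hcont : ∀ n, Continuous fun z : ℂ => weierstrassFactor p (z * lam n) - 1 := fun n =>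
    ((continuous_weierstrassFactor p).comp (continuous_id.mul continuous_const)).sub
      continuous_const
  have := (hlam.mul_left _).hasProdUniformlyOn_nat_one_add (isCompact_closedBall 0 M)
    (Eventually.of_forall hbound) fun n => (hcont n).continuousOn
  simpa using this.tendstoUniformlyOn_finsetRange

theorem stmt_6_general (p : ℕ) (hp : 1 ≤ p) (lam : ℕ → ℂ)
    (hlam : Summable fun n => ‖lam n‖ ^ p) (lamN : ℕ → ℕ → ℂ)
    (hbdd : ∃ C : ℝ, ∀ N, 1 ≤ N → ∑ n ∈ Finset.range N, ‖lamN N n‖ ^ p ≤ C)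
    (happrox : Filter.Tendsto (fun N => ∑ n ∈ Finset.range N, ‖lamN N n - lam n‖)
      Filter.atTop (nhds 0)) (M : ℝ) :
    TendstoUniformlyOn
      (fun N z => ∏ n ∈ Finset.range N, weierstrassFactor p (z * lamN N n))
      (fun z => ∏' n, weierstrassFactor p (z * lam n))
      Filter.atTop (Metric.closedBall (0 : ℂ) M) := by
  obtain ⟨C, hC⟩ := hbdd
  set S := ∑' n, ‖lam n‖ ^ p
  set Λ := max 1 (max S C)
  have hlamΛ : ∀ n, ‖lam n‖ ≤ Λ := fun n => le_max_one_of_pow_le (by omega)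
    ((hlam.le_tsum n fun _ _ => by positivity).trans (le_max_left _ _))
  have hlamNΛ : ∀ N ≥ 1, ∀ n ∈ range N, ‖lamN N n‖ ≤ Λ := fun N hN n hn =>
    le_max_one_of_pow_le (by omega)
      (((single_le_sum (fun i _ => by positivity) hn).trans (hC N hN)).trans (le_max_right _ _))
  set K := weierstrassConst p (M * Λ)
  refine (tendstoUniformlyOn_prod_range_weierstrassFactor hp hlam M).of_dist_le
    (g := fun N => Real.exp (K * (M ^ p * (C + S)))
      * ((M * Λ) ^ (p - 1) * K * (M * ∑ n ∈ range N, ‖lamN N n - lam n‖))) ?_ ?_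
  · simpa using ((happrox.const_mul M).const_mul _).const_mul _
  · filter_upwards [eventually_ge_atTop 1] with N hN z hz
    rw [dist_comm, dist_eq_norm]
    refine norm_prod_weierstrassFactor_mul_sub_prod_le hp (mem_closedBall_zero_iff.mp hz) _
      (hlamNΛ N hN) (fun n _ => hlamΛ n) ?_
    rw [sum_add_distrib]
    exact add_le_add (hC N hN) (hlam.sum_le_tsum _ fun _ _ => by positivity)

/-- Let `p ≥ 1`, let `(λ n)` satisfy `∑ ‖λ n‖^p < ∞`, and for each `N` let
`λ_{0,N}, …, λ_{N-1,N}` be the eigenvalues of an `N`-dimensional approximation.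
If the `p`-th power sums of the approximate eigenvalues are uniformly bounded and
`∑_{n<N} ‖λ_{n,N} - λ n‖ → 0`, then the approximate `p`-modified determinants
`∏_{n<N} E_p(z λ_{n,N})` converge to `∏' n, E_p(z λ n)` uniformly on every
bounded set `{‖z‖ ≤ M}`. -/
theorem stmt_6 (p : ℕ) (hp : 1 ≤ p) (lam : ℕ → ℂ)
    (hlam : Summable fun n => ‖lam n‖ ^ p) (lamN : ℕ → ℕ → ℂ)
    (hbdd : ∃ C : ℝ, ∀ N, 1 ≤ N → ∑ n ∈ Finset.range N, ‖lamN N n‖ ^ p ≤ C)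
    (happrox : Filter.Tendsto (fun N => ∑ n ∈ Finset.range N, ‖lamN N n - lam n‖)
      Filter.atTop (nhds 0)) (M : ℝ) (hM : 0 < M) :
    TendstoUniformlyOn
      (fun N z => ∏ n ∈ Finset.range N, weierstrassFactor p (z * lamN N n))
      (fun z => ∏' n, weierstrassFactor p (z * lam n))
      Filter.atTop (Metric.closedBall (0 : ℂ) M) :=
  stmt_6_general p hp lam hlam lamN hbdd happrox M
end
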